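/- arXiv:2407.06681 — 2 statements merged into one kernel-verified Lean document; each statement's English description precedes it below -/
import Mathlib

section
/- For real t ≥ 4, the Riemann–Siegel theta function satisfies |ϑ(t)| ≤ (t/2) log t + 1.36 t + 0.80. -/
set_option maxHeartbeats 1000000

open Real Complex Filter Finset Topology

/-! Auxiliary arctan estimates -/

lemma arctan_le_self' {x : ℝ} (hx : 0 ≤ x) : Real.arctan x ≤ x := by
  have key : ∀ y : ℝ, HasDerivAt (fun u => u - Real.arctan u) (1 - 1/(1+y^2)) y :=
    fun y => (hasDerivAt_id y).sub (Real.hasDerivAt_arctan y)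
  have mono : MonotoneOn (fun u => u - Real.arctan u) (Set.Icc 0 x) := by
    apply monotoneOn_of_deriv_nonneg (convex_Icc 0 x)
      (fun y _ => ((key y).continuousAt).continuousWithinAt)
      (fun y _ => ((key y).differentiableAt).differentiableWithinAt)
    · intro y hy
      rw [(key y).deriv]
      have h1 : (0:ℝ) < 1 + y^2 := by positivity
      rw [sub_nonneg, div_le_one h1]
      nlinarith [sq_nonneg y]
  have := mono (Set.left_mem_Icc.2 hx) (Set.right_mem_Icc.2 hx) hx
  simpa using this

lemma arctan_ge_cube {x : ℝ} (hx : 0 ≤ x) : x - x^3/3 ≤ Real.arctan x := by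
  have key : ∀ y : ℝ, HasDerivAt (fun u => Real.arctan u - (u - u^3/3))
      (1/(1+y^2) - (1 - y^2)) y := by
    intro y
    have h2 : HasDerivAt (fun u : ℝ => u - u^3/3) (1 - y^2) y := by
      have := ((hasDerivAt_pow 3 y).div_const 3)
      have h3 : HasDerivAt (fun u : ℝ => u - u^3/3) (1 - ((3:ℕ):ℝ) * y^(3-1)/3) y :=
        (hasDerivAt_id y).sub this
      convert h3 using 1
      ring
    exact (Real.hasDerivAt_arctan y).sub h2
  have mono : MonotoneOn (fun u => Real.arctan u - (u - u^3/3)) (Set.Icc 0 x) := by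
    apply monotoneOn_of_deriv_nonneg (convex_Icc 0 x)
      (fun y _ => ((key y).continuousAt).continuousWithinAt)
      (fun y _ => ((key y).differentiableAt).differentiableWithinAt)
    · intro y hy
      rw [(key y).deriv]
      have h1 : (0:ℝ) < 1 + y^2 := by positivity
      rw [sub_nonneg, le_div_iff₀ h1]
      nlinarith [sq_nonneg (y^2)]
  have := mono (Set.left_mem_Icc.2 hx) (Set.right_mem_Icc.2 hx) hx
  simp only [Real.arctan_zero] at this
  linarith

lemma arctan_nonneg' {x : ℝ} (hx : 0 ≤ x) : 0 ≤ Real.arctan x := by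
  rw [← Real.arctan_zero]
  exact Real.arctan_strictMono.monotone hx

/-! The series terms -/

noncomputable def aTerm (j : ℕ) (t : ℝ) : ℝ :=
  t / (2*(j+1)) - Real.arctan (t / (2*(j+1) + 1/2))

lemma aTerm_nonneg (j : ℕ) {t : ℝ} (ht : 0 ≤ t) : 0 ≤ aTerm j t := by
  unfold aTerm
  have hm : (0:ℝ) < 2*(j+1) := by positivity
  have hm' : (0:ℝ) < 2*(j+1) + 1/2 := by positivity
  have h1 : t / (2*(j+1) + 1/2) ≤ t / (2*(j+1)) :=
    div_le_div_of_nonneg_left ht hm (by linarith)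
  have h2 := arctan_le_self' (x := t / (2*(j+1) + 1/2)) (by positivity)
  linarith

lemma aTerm_le_head (j : ℕ) {t : ℝ} (ht : 0 ≤ t) : aTerm j t ≤ t / (2*(j+1)) := by
  unfold aTerm
  have := arctan_nonneg' (x := t / (2*(j+1) + 1/2)) (by positivity)
  linarith

lemma aTerm_le_bound (j : ℕ) {t : ℝ} (ht : 0 ≤ t) :
    aTerm j t ≤ t / (8*((j:ℝ)+1)^2) + t^3 / (24*((j:ℝ)+1)^3) := by
  unfold aTerm
  set m : ℝ := (j:ℝ)+1 with hm
  have hm0 : (1:ℝ) ≤ m := by simp [hm]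
  have hm1 : (0:ℝ) < m := by linarith
  set x : ℝ := t / (2*m + 1/2) with hx
  have hx0 : 0 ≤ x := by positivity
  have h1 : x - x^3/3 ≤ Real.arctan x := arctan_ge_cube hx0
  have h2 : t/(2*m) - x ≤ t/(8*m^2) := by
    rw [hx]
    rw [div_sub_div _ _ (by positivity) (by positivity),
      div_le_div_iff₀ (by positivity) (by positivity)]
    ring_nf
    nlinarith [sq_nonneg m, mul_nonneg ht (sq_nonneg m), mul_nonneg ht hm1.le]
  have h3 : x ≤ t/(2*m) := by
    rw [hx]
    apply div_le_div_of_nonneg_left ht (by positivity) (by linarith)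
  have h4 : x^3/3 ≤ t^3/(24*m^3) := by
    have h5 : x^3 ≤ (t/(2*m))^3 := pow_le_pow_left₀ hx0 h3 3
    have h6 : (t/(2*m))^3 = t^3/(8*m^3) := by rw [div_pow]; congr 1; ring
    have h7 : t^3/(8*m^3)/3 = t^3/(24*m^3) := by rw [div_div]; congr 1; ring
    linarith
  calc t / (2*m) - Real.arctan x ≤ t/(2*m) - (x - x^3/3) := by linarith
    _ = (t/(2*m) - x) + x^3/3 := by ring
    _ ≤ t/(8*m^2) + t^3/(24*m^3) := by linarith

lemma summable_invsq : Summable (fun j : ℕ => 1/((j:ℝ)+1)^2) := by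
  have := Real.summable_one_div_nat_pow.mpr (le_refl 2)
  exact_mod_cast (summable_nat_add_iff 1).mpr this

lemma summable_aTerm {t : ℝ} (ht : 0 ≤ t) : Summable (fun j => aTerm j t) := by
  have hs : Summable (fun j : ℕ => (t/8 + t^3/24) * (1/((j:ℝ)+1)^2)) :=
    summable_invsq.mul_left _
  apply Summable.of_nonneg_of_le (fun j => aTerm_nonneg j ht) _ hs
  intro j
  have h1 := aTerm_le_bound j ht
  have hm1 : (1:ℝ) ≤ (j:ℝ)+1 := by have := Nat.cast_nonneg (α:=ℝ) j; linarith
  have h2 : t^3 / (24*((j:ℝ)+1)^3) ≤ t^3/(24*((j:ℝ)+1)^2) := by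
    apply div_le_div_of_nonneg_left (by positivity) (by positivity)
    have : ((j:ℝ)+1)^2 ≤ ((j:ℝ)+1)^3 := pow_le_pow_right₀ hm1 (by norm_num)
    linarith
  have : t / (8*((j:ℝ)+1)^2) + t^3/(24*((j:ℝ)+1)^2) = (t/8 + t^3/24) * (1/((j:ℝ)+1)^2) := by
    field_simp
  linarith

lemma continuous_aTerm (j : ℕ) : Continuous (aTerm j) := by
  unfold aTerm
  exact (continuous_id.div_const _).sub
    (Real.continuous_arctan.comp (continuous_id.div_const _))

lemma aTerm_le_M (j : ℕ) {x T : ℝ} (hx : 0 ≤ x) (hxT : x ≤ T) :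
    aTerm j x ≤ (T/8 + T^3/24) * (1/((j:ℝ)+1)^2) := by
  have hm1 : (1:ℝ) ≤ (j:ℝ)+1 := by
    have := Nat.cast_nonneg (α:=ℝ) j; linarith
  have hm0 : (0:ℝ) < (j:ℝ)+1 := by linarith
  have hT : 0 ≤ T := le_trans hx hxT
  calc aTerm j x ≤ x / (8*((j:ℝ)+1)^2) + x^3 / (24*((j:ℝ)+1)^3) := aTerm_le_bound j hx
    _ ≤ T / (8*((j:ℝ)+1)^2) + T^3 / (24*((j:ℝ)+1)^3) := by gcongr
    _ ≤ T / (8*((j:ℝ)+1)^2) + T^3 / (24*((j:ℝ)+1)^2) := by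
        have hp : 24*((j:ℝ)+1)^2 ≤ 24*((j:ℝ)+1)^3 := by
          have := pow_le_pow_right₀ hm1 (show 2 ≤ 3 by norm_num)
          linarith
        have h9 := div_le_div_of_nonneg_left (by positivity : (0:ℝ) ≤ T^3)
          (by positivity : (0:ℝ) < 24*((j:ℝ)+1)^2) hp
        linarith
    _ = (T/8 + T^3/24) * (1/((j:ℝ)+1)^2) := by field_simp

/-! The continuous argument function built from the Euler product -/

noncomputable def hFun (t : ℝ) : ℝ :=
  t/2 * -Real.eulerMascheroniConstant - Real.arctan (2*t) + ∑' j, aTerm j t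

noncomputable def angJ (s : ℝ) (j : ℕ) : ℝ := Real.arctan ((s/2)/((j:ℝ)+1/4))

noncomputable def dJ (s : ℝ) (j : ℕ) : ℝ := ((j:ℝ)+1/4) / Real.cos (angJ s j)

noncomputable def thetaSeq (s : ℝ) (n : ℕ) : ℝ :=
  s/2 * Real.log n - ∑ j ∈ Finset.range (n+1), angJ s j

lemma polar_decomp {a b : ℝ} (ha : 0 < a) :
    (a : ℂ) + (b:ℝ) * Complex.I
      = ((a / Real.cos (Real.arctan (b/a)) : ℝ) : ℂ)
        * Complex.exp ((Real.arctan (b/a) : ℝ) * Complex.I) := by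
  set θ := Real.arctan (b/a) with hθ
  have hc : 0 < Real.cos θ := Real.cos_arctan_pos _
  have hsin : Real.sin θ = b/a * Real.cos θ := by
    have h1 : Real.tan θ = b/a := Real.tan_arctan _
    rw [Real.tan_eq_sin_div_cos] at h1
    field_simp at h1
    field_simp
    linarith [h1]
  have h1 : a / Real.cos θ * Real.cos θ = a := div_mul_cancel₀ _ hc.ne'
  have h2 : a / Real.cos θ * Real.sin θ = b := by
    rw [hsin]
    field_simp
  rw [Complex.exp_mul_I, ← Complex.ofReal_cos, ← Complex.ofReal_sin]
  rw [show ((a / Real.cos θ : ℝ) : ℂ) * ((Real.cos θ : ℝ) + (Real.sin θ : ℝ) * Complex.I)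
      = ((a / Real.cos θ * Real.cos θ : ℝ) : ℂ) + ((a / Real.cos θ * Real.sin θ : ℝ) : ℂ) * Complex.I by
    push_cast; ring]
  rw [h1, h2]

lemma gammaSeq_polar (s : ℝ) (n : ℕ) (hn : 1 ≤ n) :
    ∃ R : ℝ, 0 < R ∧ Complex.GammaSeq (1/4 + Complex.I * (s:ℝ) / 2) n
      = (R:ℂ) * Complex.exp ((thetaSeq s n : ℝ) * Complex.I) := by
  set z : ℂ := 1/4 + Complex.I * (s:ℝ) / 2 with hz
  have hn0 : (0:ℝ) < n := by exact_mod_cast hn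
  have hcpow : (n:ℂ) ^ z = ((Real.exp (Real.log n/4) : ℝ) : ℂ)
      * Complex.exp ((s/2*Real.log n : ℝ) * Complex.I) := by
    rw [Complex.cpow_def_of_ne_zero (by exact_mod_cast hn0.ne')]
    rw [show ((n:ℂ)) = (((n:ℝ)):ℂ) by push_cast; ring]
    rw [← Complex.ofReal_log hn0.le]
    rw [Complex.ofReal_exp, ← Complex.exp_add]
    congr 1
    rw [hz]
    push_cast
    ring
  have hdpos : ∀ j, 0 < dJ s j := fun j => by
    have : (0:ℝ) < (j:ℝ)+1/4 := by positivity
    exact div_pos this (Real.cos_arctan_pos _)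
  have hfac : ∀ j : ℕ, z + (j:ℂ) = ((dJ s j : ℝ):ℂ) * Complex.exp ((angJ s j : ℝ) * Complex.I) := by
    intro j
    have ha : (0:ℝ) < (j:ℝ)+1/4 := by positivity
    have h1 : z + (j:ℂ) = (((j:ℝ)+1/4 : ℝ) : ℂ) + ((s/2 : ℝ):ℂ) * Complex.I := by
      rw [hz]; push_cast; ring
    rw [h1, polar_decomp ha]
    rfl
  have hprod : ∏ j ∈ Finset.range (n+1), (z + (j:ℂ))
      = ((∏ j ∈ Finset.range (n+1), dJ s j : ℝ) : ℂ)
        * Complex.exp (((∑ j ∈ Finset.range (n+1), angJ s j : ℝ)) * Complex.I) := by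
    rw [Finset.prod_congr rfl (fun j _ => hfac j), Finset.prod_mul_distrib]
    rw [← Complex.exp_sum]
    push_cast
    rw [Finset.sum_mul]
  refine ⟨Real.exp (Real.log n/4) * (Nat.factorial n : ℝ)
      / (∏ j ∈ Finset.range (n+1), dJ s j), ?_, ?_⟩
  · have h : (0:ℝ) < ∏ j ∈ Finset.range (n+1), dJ s j := Finset.prod_pos (fun j _ => hdpos j)
    have h2 : (0:ℝ) < (Nat.factorial n : ℝ) := by exact_mod_cast Nat.factorial_pos n
    positivity
  · rw [Complex.GammaSeq, hcpow, hprod]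
    have hD : (0:ℝ) < ∏ j ∈ Finset.range (n+1), dJ s j := Finset.prod_pos (fun j _ => hdpos j)
    have hDne : ((∏ j ∈ Finset.range (n+1), dJ s j : ℝ) : ℂ) ≠ 0 := by exact_mod_cast hD.ne'
    have hexp1 : Complex.exp (((∑ j ∈ Finset.range (n+1), angJ s j : ℝ)) * Complex.I) ≠ 0 :=
      Complex.exp_ne_zero _
    have hsub : Complex.exp ((thetaSeq s n : ℝ) * Complex.I)
        = Complex.exp ((s/2*Real.log n : ℝ) * Complex.I)
          / Complex.exp (((∑ j ∈ Finset.range (n+1), angJ s j : ℝ)) * Complex.I) := by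
      rw [← Complex.exp_sub]
      congr 1
      rw [thetaSeq]
      push_cast
      ring
    rw [hsub]
    push_cast
    field_simp

lemma thetaSeq_eq (s : ℝ) (n : ℕ) :
    thetaSeq s n = s/2 * (Real.log n - (harmonic n : ℝ)) - Real.arctan (2*s)
      + ∑ j ∈ Finset.range n, aTerm j s := by
  rw [thetaSeq, Finset.sum_range_succ']
  have h0 : angJ s 0 = Real.arctan (2*s) := by
    rw [angJ]
    norm_num
    congr 1
    ring
  have hj : ∀ j : ℕ, angJ s (j+1) = s / (2*((j:ℝ)+1)) - aTerm j s := by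
    intro j
    rw [angJ, aTerm]
    have : (s/2)/(((j+1:ℕ):ℝ)+1/4) = s / (2*((j:ℝ)+1) + 1/2) := by
      push_cast
      rw [div_div]
      congr 1
      ring
    rw [this]
    ring
  rw [Finset.sum_congr rfl (fun j _ => hj j), Finset.sum_sub_distrib, h0]
  have hh : ∑ j ∈ Finset.range n, s / (2*((j:ℝ)+1)) = s/2 * (harmonic n : ℝ) := by
    rw [harmonic]
    push_cast
    rw [Finset.mul_sum]
    apply Finset.sum_congr rfl
    intro j _
    rw [div_eq_mul_inv, mul_inv]
    ring
  rw [hh]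
  ring

lemma theta_tendsto {s : ℝ} (hs : 0 ≤ s) :
    Tendsto (fun n : ℕ => thetaSeq s n) atTop (𝓝 (hFun s)) := by
  have T1 : Tendsto (fun n : ℕ => Real.log n - (harmonic n : ℝ)) atTop
      (𝓝 (-Real.eulerMascheroniConstant)) := by
    have h := Real.tendsto_eulerMascheroniSeq'.neg
    apply h.congr'
    filter_upwards [eventually_ge_atTop 1] with n hn
    rw [Real.eulerMascheroniSeq', if_neg (by omega)]
    ring
  have T2 : Tendsto (fun n : ℕ => ∑ j ∈ Finset.range n, aTerm j s) atTop
      (𝓝 (∑' j, aTerm j s)) := (summable_aTerm hs).hasSum.tendsto_sum_nat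
  have h3 := ((T1.const_mul (s/2)).sub_const (Real.arctan (2*s))).add T2
  unfold hFun
  apply Tendsto.congr' _ h3
  filter_upwards with n
  rw [thetaSeq_eq]

lemma exp_hFun_eq (g : ℝ → ℝ)
    (harg : ∀ t : ℝ, Complex.Gamma (1/4 + Complex.I * t / 2)
      = (‖Complex.Gamma (1/4 + Complex.I * t / 2)‖ : ℂ)
          * Complex.exp (Complex.I * g t))
    {s : ℝ} (hs : 0 ≤ s) :
    Complex.exp (Complex.I * hFun s) = Complex.exp (Complex.I * g s) := by
  set z : ℂ := 1/4 + Complex.I * (s:ℝ) / 2 with hz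
  have hzre : z.re = 1/4 := by simp [hz]
  have hzne : Complex.Gamma z ≠ 0 := by
    apply Complex.Gamma_ne_zero
    intro m hm
    have : z.re = ((-(m:ℂ)).re) := by rw [hm]
    rw [hzre] at this
    simp at this
    norm_num at this
    nlinarith [Nat.cast_nonneg (α:=ℝ) m, this]
  have hA : 0 < ‖Complex.Gamma z‖ := norm_pos_iff.mpr hzne
  set A : ℝ := ‖Complex.Gamma z‖ with hAdef
  have hdecomp : ∀ n : ℕ, 1 ≤ n → Complex.GammaSeq z n
      = ((‖Complex.GammaSeq z n‖ : ℝ) : ℂ)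
        * Complex.exp ((thetaSeq s n : ℝ) * Complex.I) := by
    intro n hn
    obtain ⟨R, hR, hEq⟩ := gammaSeq_polar s n hn
    have habs : ‖Complex.GammaSeq z n‖ = R := by
      rw [hEq]
      rw [norm_mul, Complex.norm_exp_ofReal_mul_I, Complex.norm_real, Real.norm_eq_abs, abs_of_pos hR]
      ring
    rw [habs, hEq]
  have hRA : Tendsto (fun n : ℕ => ‖Complex.GammaSeq z n‖) atTop (𝓝 A) :=
    (continuous_norm.tendsto _).comp (Complex.GammaSeq_tendsto_Gamma z)
  have hexp : Tendsto (fun n : ℕ => Complex.exp ((thetaSeq s n : ℝ) * Complex.I)) atTop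
      (𝓝 (Complex.exp ((hFun s : ℝ) * Complex.I))) := by
    have hc : Continuous (fun x : ℝ => Complex.exp ((x:ℂ) * Complex.I)) :=
      Complex.continuous_exp.comp (Complex.continuous_ofReal.mul continuous_const)
    exact (hc.tendsto _).comp (theta_tendsto hs)
  have hmul : Tendsto (fun n : ℕ => ((‖Complex.GammaSeq z n‖ : ℝ) : ℂ)
      * Complex.exp ((thetaSeq s n : ℝ) * Complex.I)) atTop
      (𝓝 ((A:ℂ) * Complex.exp ((hFun s : ℝ) * Complex.I))) :=
    ((Complex.continuous_ofReal.tendsto _).comp hRA).mul hexp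
  have hG : Tendsto (fun n : ℕ => Complex.GammaSeq z n) atTop
      (𝓝 ((A:ℂ) * Complex.exp ((hFun s : ℝ) * Complex.I))) := by
    apply hmul.congr'
    filter_upwards [eventually_ge_atTop 1] with n hn
    exact (hdecomp n hn).symm
  have hGamma : Complex.Gamma z = (A:ℂ) * Complex.exp ((hFun s : ℝ) * Complex.I) :=
    tendsto_nhds_unique (Complex.GammaSeq_tendsto_Gamma z) hG
  have hg := harg s
  rw [← hz] at hg
  rw [hGamma] at hg
  have habs2 : ‖((A:ℂ) * Complex.exp (((hFun s : ℝ)) * Complex.I))‖ = A := by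
    rw [norm_mul, Complex.norm_exp_ofReal_mul_I, Complex.norm_real, Real.norm_eq_abs, abs_of_pos hA]
    ring
  rw [habs2] at hg
  have hAne : ((A:ℝ):ℂ) ≠ 0 := by exact_mod_cast hA.ne'
  have := mul_left_cancel₀ hAne hg
  rw [← this, mul_comm]

/-! Continuity and initial value of `hFun` -/

lemma hFun_continuousOn {T : ℝ} (hT : 0 ≤ T) : ContinuousOn hFun (Set.Icc 0 T) := by
  have hbase : Continuous (fun t : ℝ => t/2 * -Real.eulerMascheroniConstant
      - Real.arctan (2*t)) :=
    ((continuous_id.div_const _).mul continuous_const).sub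
      (Real.continuous_arctan.comp (continuous_const.mul continuous_id))
  have hMs : Summable (fun j : ℕ => (T/8 + T^3/24) * (1/((j:ℝ)+1)^2)) :=
    summable_invsq.mul_left _
  have hunif := tendstoUniformlyOn_tsum hMs
      (f := fun j (x : ℝ) => aTerm j x) (s := Set.Icc 0 T) ?_
  · have hts : ContinuousOn (fun x => ∑' j, aTerm j x) (Set.Icc 0 T) := by
      apply hunif.continuousOn
      refine Filter.Frequently.of_forall (fun n => ?_)
      exact (continuous_finset_sum _ (fun j _ => continuous_aTerm j)).continuousOn
    exact (hbase.continuousOn).add hts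
  · intro j x hx
    rw [Real.norm_eq_abs, _root_.abs_of_nonneg (aTerm_nonneg j hx.1)]
    exact aTerm_le_M j hx.1 hx.2

lemma hFun_zero : hFun 0 = 0 := by
  simp [hFun, aTerm]

/-! Unwinding: two continuous arguments agreeing mod 2π and at 0 agree -/

lemma unwind {f g : ℝ → ℝ} {t : ℝ} (ht : 0 ≤ t)
    (hfc : ContinuousOn f (Set.Icc 0 t)) (hgc : Continuous g)
    (hf0 : f 0 = g 0)
    (heq : ∀ s ∈ Set.Icc (0:ℝ) t, Complex.exp (Complex.I * f s) = Complex.exp (Complex.I * g s)) :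
    f t = g t := by
  set φ : ℝ → ℝ := fun s => f s - g s with hφ
  have hφc : ContinuousOn φ (Set.Icc 0 t) := hfc.sub hgc.continuousOn
  have hkey : ∀ s ∈ Set.Icc (0:ℝ) t, ∃ k : ℤ, φ s = 2 * π * k := by
    intro s hs
    obtain ⟨k, hk⟩ := Complex.exp_eq_exp_iff_exists_int.mp (heq s hs)
    refine ⟨k, ?_⟩
    have : ((f s : ℂ) - g s) * Complex.I = ((2 * π * k : ℝ) : ℂ) * Complex.I := by
      push_cast
      push_cast at hk
      linear_combination hk
    have h2 := mul_right_cancel₀ Complex.I_ne_zero this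
    exact_mod_cast h2
  have hφ0 : φ 0 = 0 := by simp [hφ, hf0]
  by_contra hne
  have hφt : φ t ≠ 0 := fun h => hne (by rw [hφ] at h; dsimp at h; linarith)
  obtain ⟨k, hk⟩ := hkey t (Set.right_mem_Icc.2 ht)
  have hcases : φ t ≥ 2*π ∨ φ t ≤ -(2*π) := by
    rcases lt_trichotomy (k:ℝ) 0 with hk0 | hk0 | hk0
    · right
      have : (k:ℝ) ≤ -1 := by exact_mod_cast Int.le_of_lt_add_one (by exact_mod_cast hk0)
      rw [hk]
      nlinarith [Real.pi_pos]
    · exfalso; apply hφt; rw [hk, hk0]; ring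
    · left
      have : (1:ℝ) ≤ (k:ℝ) := by exact_mod_cast hk0
      rw [hk]
      nlinarith [Real.pi_pos]
  have hIVT : ∃ s ∈ Set.Icc (0:ℝ) t, φ s = π ∨ φ s = -π := by
    rcases hcases with hc | hc
    · have hsub : Set.Icc (φ 0) (φ t) ⊆ φ '' Set.Icc 0 t :=
        intermediate_value_Icc ht hφc
      have hπ : π ∈ Set.Icc (φ 0) (φ t) := by
        rw [hφ0]
        constructor
        · exact Real.pi_pos.le
        · nlinarith [Real.pi_pos]
      obtain ⟨s, hs, hφs⟩ := hsub hπ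
      exact ⟨s, hs, Or.inl hφs⟩
    · have hsub : Set.Icc (φ t) (φ 0) ⊆ φ '' Set.Icc 0 t :=
        intermediate_value_Icc' ht hφc
      have hπ : -π ∈ Set.Icc (φ t) (φ 0) := by
        rw [hφ0]
        constructor
        · nlinarith [Real.pi_pos]
        · nlinarith [Real.pi_pos]
      obtain ⟨s, hs, hφs⟩ := hsub hπ
      exact ⟨s, hs, Or.inr hφs⟩
  obtain ⟨s, hs, hφs⟩ := hIVT
  obtain ⟨m, hm⟩ := hkey s hs
  rcases hφs with h | h <;> rw [h] at hm
  · rcases lt_trichotomy (m:ℝ) 0 with h0 | h0 | h0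
    · have : (m:ℝ) ≤ -1 := by exact_mod_cast Int.le_of_lt_add_one (by exact_mod_cast h0)
      nlinarith [Real.pi_pos]
    · rw [h0] at hm; nlinarith [Real.pi_pos]
    · have : (1:ℝ) ≤ (m:ℝ) := by exact_mod_cast h0
      nlinarith [Real.pi_pos]
  · rcases lt_trichotomy (m:ℝ) 0 with h0 | h0 | h0
    · have : (m:ℝ) ≤ -1 := by exact_mod_cast Int.le_of_lt_add_one (by exact_mod_cast h0)
      nlinarith [Real.pi_pos]
    · rw [h0] at hm; nlinarith [Real.pi_pos]
    · have : (1:ℝ) ≤ (m:ℝ) := by exact_mod_cast h0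
      nlinarith [Real.pi_pos]

/-! Quantitative bound on the series -/

lemma tsum_aTerm_le {t : ℝ} (ht : 4 ≤ t) :
    ∑' j, aTerm j t ≤ t/2 * Real.log t + t/2 + 2*t/27 + 1/6 := by
  have ht0 : (0:ℝ) ≤ t := by linarith
  set N : ℕ := ⌊t⌋₊ with hNdef
  have hN4 : 4 ≤ N := Nat.le_floor (by exact_mod_cast ht)
  have hNt : (N:ℝ) ≤ t := Nat.floor_le ht0
  have hNt1 : t < (N:ℝ) + 1 := Nat.lt_floor_add_one t
  have hN34 : 3*t/4 ≤ (N:ℝ) := by linarith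
  have hNpos : (0:ℝ) < N := by linarith
  have hsum := summable_aTerm ht0
  rw [← hsum.sum_add_tsum_nat_add N]
  have hhead : ∑ j ∈ Finset.range N, aTerm j t ≤ t/2 * (1 + Real.log N) := by
    calc ∑ j ∈ Finset.range N, aTerm j t ≤ ∑ j ∈ Finset.range N, t / (2*((j:ℝ)+1)) :=
          Finset.sum_le_sum (fun j _ => aTerm_le_head j ht0)
      _ = t/2 * (harmonic N : ℝ) := by
          rw [harmonic]
          push_cast
          rw [Finset.mul_sum]
          apply Finset.sum_congr rfl
          intro j _
          rw [div_eq_mul_inv, mul_inv]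
          ring
      _ ≤ t/2 * (1 + Real.log N) := by
          have := harmonic_le_one_add_log N
          have h2 : (0:ℝ) ≤ t/2 := by linarith
          exact mul_le_mul_of_nonneg_left (by exact_mod_cast this) h2
  have hlogN : Real.log N ≤ Real.log t := Real.log_le_log hNpos hNt
  set C : ℝ := t/8 + t^3/(24*N) with hC
  have htail : ∑' j, aTerm (j + N) t ≤ C * (1/N) := by
    apply Real.tsum_le_of_sum_range_le (fun j => aTerm_nonneg _ ht0)
    intro m
    have hstep : ∀ j : ℕ, aTerm (j + N) t ≤ C * (1/((N:ℝ)+j)) - C * (1/((N:ℝ)+j+1)) := by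
      intro j
      have hMd : ((j + N : ℕ):ℝ) + 1 = (N:ℝ) + j + 1 := by push_cast; ring
      have hNj : (0:ℝ) < (N:ℝ)+j := by positivity
      have hNj1 : (0:ℝ) < (N:ℝ)+j+1 := by positivity
      have h1 := aTerm_le_bound (j + N) ht0
      rw [hMd] at h1
      have hdiff : C * (1/((N:ℝ)+j)) - C * (1/((N:ℝ)+j+1)) = C / (((N:ℝ)+j) * ((N:ℝ)+j+1)) := by
        field_simp
        ring
      rw [hdiff]
      have hb1 : t / (8*((N:ℝ)+j+1)^2) ≤ (t/8) / (((N:ℝ)+j) * ((N:ℝ)+j+1)) := by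
        rw [div_le_div_iff₀ (by positivity) (by positivity)]
        nlinarith [Nat.cast_nonneg (α:=ℝ) j]
      have hb2 : t^3 / (24*((N:ℝ)+j+1)^3) ≤ (t^3/(24*N)) / (((N:ℝ)+j) * ((N:ℝ)+j+1)) := by
        rw [div_div]
        rw [div_le_div_iff₀ (by positivity) (by positivity)]
        have hcast : (0:ℝ) ≤ (j:ℝ) := Nat.cast_nonneg j
        have ht3 : (0:ℝ) ≤ t^3 := by positivity
        have hkey : (N:ℝ) * (((N:ℝ)+j) * ((N:ℝ)+j+1)) ≤ ((N:ℝ)+j+1)^3 := by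
          nlinarith [sq_nonneg ((N:ℝ)+j), hcast, hNpos]
        nlinarith [mul_le_mul_of_nonneg_left hkey ht3]
      have hCsplit : C / (((N:ℝ)+j) * ((N:ℝ)+j+1))
          = (t/8) / (((N:ℝ)+j) * ((N:ℝ)+j+1)) + (t^3/(24*N)) / (((N:ℝ)+j) * ((N:ℝ)+j+1)) := by
        rw [hC, add_div]
      rw [hCsplit]
      linarith
    calc ∑ j ∈ Finset.range m, aTerm (j + N) t
        ≤ ∑ j ∈ Finset.range m, (C * (1/((N:ℝ)+j)) - C * (1/((N:ℝ)+j+1))) :=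
          Finset.sum_le_sum (fun j _ => hstep j)
      _ = ∑ j ∈ Finset.range m, ((fun j : ℕ => C * (1/((N:ℝ)+j))) j
            - (fun j : ℕ => C * (1/((N:ℝ)+j))) (j+1)) := by
          apply Finset.sum_congr rfl
          intro j _
          push_cast
          ring
      _ = C * (1/((N:ℝ)+(0:ℕ))) - C * (1/((N:ℝ)+(m:ℕ))) :=
          Finset.sum_range_sub' (fun j : ℕ => C * (1/((N:ℝ)+j))) m
      _ ≤ C * (1/N) := by
          have h1 : (0:ℝ) < (N:ℝ)+m := by positivity
          have hCpos : 0 ≤ C := by rw [hC]; positivity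
          have h5 : 0 ≤ C * (1/((N:ℝ)+m)) := by positivity
          simp only [Nat.cast_zero, add_zero]
          linarith
  have hCN : C * (1/N) ≤ 1/6 + 2*t/27 := by
    rw [hC]
    have h1 : t/8 * (1/N) ≤ 1/6 := by
      rw [div_mul_eq_mul_div, mul_one_div, div_div]
      rw [div_le_iff₀ (by positivity)]
      nlinarith
    have h2 : t^3/(24*N) * (1/N) ≤ 2*t/27 := by
      rw [div_mul_eq_mul_div, mul_one_div, div_div]
      rw [div_le_div_iff₀ (by positivity) (by norm_num)]
      have h4a : (0:ℝ) ≤ 4*(N:ℝ) - 3*t := by linarith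
      have h4b : (0:ℝ) ≤ 4*(N:ℝ) + 3*t := by linarith
      nlinarith [mul_nonneg (mul_nonneg ht0 h4a) h4b]
    rw [add_mul]
    linarith
  have h2 : (0:ℝ) ≤ t/2 := by linarith
  have := mul_le_mul_of_nonneg_left hlogN h2
  linarith

/-- If `g : ℝ → ℝ` is the continuous argument of `Γ(1/4 + it/2)` vanishing at
`t = 0`, so that the Riemann–Siegel theta function is
`ϑ(t) = g(t) - (t/2) log π`, then `|ϑ(t)| ≤ (t/2) log t + 1.36 t + 0.80` for `t ≥ 4`. -/
theorem stmt7 (g : ℝ → ℝ) (hcont : Continuous g) (h0 : g 0 = 0)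
    (harg : ∀ t : ℝ, Complex.Gamma (1/4 + Complex.I * t / 2)
      = (‖Complex.Gamma (1/4 + Complex.I * t / 2)‖ : ℂ)
          * Complex.exp (Complex.I * g t))
    (t : ℝ) (ht : 4 ≤ t) :
    |g t - t / 2 * Real.log π| ≤ t / 2 * Real.log t + 1.36 * t + 0.80 := by
  have ht0 : (0:ℝ) ≤ t := by linarith
  have hgt : hFun t = g t := by
    apply unwind ht0 (hFun_continuousOn ht0) hcont (by rw [hFun_zero, h0])
    intro s hs
    exact exp_hFun_eq g harg hs.1
  rw [← hgt]
  -- numeric facts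
  have hγ1 : Real.eulerMascheroniConstant < 2/3 := Real.eulerMascheroniConstant_lt_two_thirds
  have hγ0 : 0 < Real.eulerMascheroniConstant :=
    lt_trans (by norm_num) Real.one_half_lt_eulerMascheroniConstant
  have hπ : π < 3.15 := Real.pi_lt_d2
  have hπ0 : 0 < π := Real.pi_pos
  have hlogπ : Real.log π ≤ π - 1 := Real.log_le_sub_one_of_pos hπ0
  have hlogπ0 : 0 ≤ Real.log π := Real.log_nonneg (by linarith [Real.pi_gt_three])
  have hlog2 : 0.6931471803 < Real.log 2 := Real.log_two_gt_d9
  have hlog4 : Real.log 4 ≤ Real.log t := Real.log_le_log (by norm_num) ht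
  have hlog4' : Real.log 4 = 2 * Real.log 2 := by
    rw [show (4:ℝ) = 2^2 by norm_num, Real.log_pow]
    push_cast; ring
  have hlogt : 1.38 ≤ Real.log t := by
    rw [hlog4'] at hlog4
    linarith
  have hS0 : 0 ≤ ∑' j, aTerm j t := tsum_nonneg (fun j => aTerm_nonneg j ht0)
  have hS1 := tsum_aTerm_le ht
  have harct0 : 0 ≤ Real.arctan (2*t) := arctan_nonneg' (by linarith)
  have harct1 : Real.arctan (2*t) ≤ π/2 := (Real.arctan_lt_pi_div_two _).le
  rw [abs_le]
  have hmul1 : t/2 * Real.log π ≤ t/2 * 2.15 :=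
    mul_le_mul_of_nonneg_left (by linarith) (by linarith)
  have hmul2 : t/2 * 1.38 ≤ t/2 * Real.log t :=
    mul_le_mul_of_nonneg_left hlogt (by linarith)
  have hmul3 : 0 ≤ t/2 * Real.log π := mul_nonneg (by linarith) hlogπ0
  have hmul4 : t/2 * Real.eulerMascheroniConstant ≤ t/2 * (2/3) :=
    mul_le_mul_of_nonneg_left hγ1.le (by linarith)
  have hmul5 : 0 ≤ t/2 * Real.eulerMascheroniConstant :=
    mul_nonneg (by linarith) hγ0.le
  constructor
  · -- lower bound
    rw [hFun]
    have : t/2 * -Real.eulerMascheroniConstant = -(t/2 * Real.eulerMascheroniConstant) := by ring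
    rw [this]
    linarith
  · -- upper bound
    rw [hFun]
    have : t/2 * -Real.eulerMascheroniConstant = -(t/2 * Real.eulerMascheroniConstant) := by ring
    rw [this]
    linarith
end

section
/- For σ ≤ -1 and |t| ≥ 1/2, one has |ζ(σ + it)| ≤ 2 (2π)^σ ((1-σ)² + t²)^{1/4 - σ/2}. -/
open Real Complex

open Filter Finset Topology Set
open scoped Nat

noncomputable section

/-- `arctan t ≤ t` for `t ≥ 0`. -/
lemma my_arctan_le_self {t : ℝ} (ht : 0 ≤ t) : Real.arctan t ≤ t := by
  have h : ∀ v ∈ Set.uIcc (0:ℝ) t, HasDerivAt Real.arctan (1/(1+v^2)) v := fun v _ => by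
    simpa using Real.hasDerivAt_arctan v
  have h2 : ∀ v ∈ Set.uIcc (0:ℝ) t, HasDerivAt (fun u : ℝ => u) (1:ℝ) v := fun v _ => hasDerivAt_id v
  have e1 : ∫ v in (0:ℝ)..t, 1/(1+v^2) = Real.arctan t - Real.arctan 0 :=
    intervalIntegral.integral_eq_sub_of_hasDerivAt h
      (Continuous.intervalIntegrable (continuous_const.div (by fun_prop) (fun v => by positivity)) _ _)
  have e2 : ∫ v in (0:ℝ)..t, (1:ℝ) = t - 0 := by simp
  have : ∫ v in (0:ℝ)..t, 1/(1+v^2) ≤ ∫ v in (0:ℝ)..t, (1:ℝ) := by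
    apply intervalIntegral.integral_mono_on ht
      (Continuous.intervalIntegrable (continuous_const.div (by fun_prop) (fun v => by positivity)) _ _)
      (intervalIntegrable_const)
    intro v hv
    show 1/(1+v^2) ≤ 1
    rw [div_le_one (by positivity)]
    nlinarith [sq_nonneg v]
  rw [e1, e2, Real.arctan_zero, sub_zero] at this
  linarith

/-- Padé-type lower bound for log. -/
lemma my_pade_log {u : ℝ} (hu : 0 ≤ u) : 2*u/(2+u) ≤ Real.log (1+u) := by
  have h1 : ∀ v ∈ Set.uIcc (0:ℝ) u, HasDerivAt (fun w : ℝ => Real.log (1+w)) (1/(1+v)) v := by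
    intro v hv
    rw [Set.uIcc_of_le hu] at hv
    have hv0 : (0:ℝ) ≤ v := hv.1
    have := (Real.hasDerivAt_log (by linarith : (1:ℝ)+v ≠ 0)).comp v
      ((hasDerivAt_id v).const_add 1)
    simpa [one_div, Function.comp_def] using this
  have h2 : ∀ v ∈ Set.uIcc (0:ℝ) u, HasDerivAt (fun w : ℝ => 2*w/(2+w)) (4/(2+v)^2) v := by
    intro v hv
    rw [Set.uIcc_of_le hu] at hv
    have hv0 : (0:ℝ) ≤ v := hv.1
    have hne : (2:ℝ)+v ≠ 0 := by linarith
    have := ((hasDerivAt_id v).const_mul (2:ℝ)).fun_div ((hasDerivAt_id v).const_add 2) hne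
    refine this.congr_deriv ?_
    simp only [id]
    field_simp
    ring
  have e1 : ∫ v in (0:ℝ)..u, 1/(1+v) = Real.log (1+u) - Real.log (1+0) :=
    intervalIntegral.integral_eq_sub_of_hasDerivAt h1
      (ContinuousOn.intervalIntegrable (by
        apply ContinuousOn.div continuousOn_const (by fun_prop)
        intro v hv
        rw [Set.uIcc_of_le hu] at hv
        have := hv.1; intro h; linarith [h]))
  have e2 : ∫ v in (0:ℝ)..u, 4/(2+v)^2 = 2*u/(2+u) - 2*0/(2+0) :=
    intervalIntegral.integral_eq_sub_of_hasDerivAt h2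
      (ContinuousOn.intervalIntegrable (by
        apply ContinuousOn.div continuousOn_const (by fun_prop)
        intro v hv
        rw [Set.uIcc_of_le hu] at hv
        have := hv.1; positivity))
  have hmono : ∫ v in (0:ℝ)..u, 4/(2+v)^2 ≤ ∫ v in (0:ℝ)..u, 1/(1+v) := by
    apply intervalIntegral.integral_mono_on hu
    · exact ContinuousOn.intervalIntegrable (by
        apply ContinuousOn.div continuousOn_const (by fun_prop)
        intro v hv
        rw [Set.uIcc_of_le hu] at hv
        have := hv.1; positivity)
    · exact ContinuousOn.intervalIntegrable (by
        apply ContinuousOn.div continuousOn_const (by fun_prop)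
        intro v hv
        rw [Set.uIcc_of_le hu] at hv
        have := hv.1; intro h; linarith [h])
    · intro v hv
      have hv0 : (0:ℝ) ≤ v := hv.1
      rw [div_le_div_iff₀ (by positivity) (by positivity)]
      nlinarith [sq_nonneg v]
  rw [e1] at hmono
  rw [e2] at hmono
  simp at hmono
  linarith

lemma my_factorial_le (n : ℕ) (hn : 1 ≤ n) :
    (n ! : ℝ) ≤ 7/2 * (n:ℝ) ^ ((n:ℝ) + 1/2) * Real.exp (-(n:ℝ)) := by
  induction n with
  | zero => omega
  | succ m ih =>
    rcases Nat.lt_or_ge m 1 with h1 | h1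
    · -- n = 1
      have hm0 : m = 0 := by omega
      subst hm0
      have he : Real.exp 1 ≤ 7/2 := by
        have := Real.exp_one_lt_d9
        linarith
      have h2 : Real.exp (-(1:ℝ)) = (Real.exp 1)⁻¹ := by
        rw [Real.exp_neg]
      norm_num [Nat.factorial, Real.one_rpow, h2]
      rw [inv_eq_one_div, mul_one_div, le_div_iff₀ (Real.exp_pos 1)]
      linarith
    · have ihm := ih h1
      set a : ℝ := (m : ℝ) with ha
      have ha1 : (1:ℝ) ≤ a := by rw [ha]; exact_mod_cast h1
      have ha0 : (0:ℝ) < a := by linarith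
      -- key : (a+1) * a ^ (a + 1/2) * exp (-a) ≤ (a+1) ^ ((a+1) + 1/2) * exp (-(a+1))
      have hlog : 1 ≤ (a + 1/2) * Real.log (1 + 1/a) := by
        have hp := my_pade_log (u := 1/a) (by positivity)
        have h2 : 2*(1/a)/(2+1/a) * (a + 1/2) = 1 := by
          field_simp
        calc 1 = 2*(1/a)/(2+1/a) * (a + 1/2) := h2.symm
        _ ≤ Real.log (1 + 1/a) * (a + 1/2) := by
              apply mul_le_mul_of_nonneg_right hp (by linarith)
        _ = (a + 1/2) * Real.log (1 + 1/a) := by ring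
      have hkey : (a+1) * (a ^ (a + 1/2) * Real.exp (-a)) ≤
          (a+1) ^ ((a+1) + 1/2) * Real.exp (-(a+1)) := by
        have e1 : (a+1) ^ ((a+1) + 1/2) = (a+1) ^ (a + 1/2) * (a+1) := by
          rw [show (a+1) + 1/2 = (a + 1/2) + 1 by ring, Real.rpow_add_one (by linarith)]
        rw [e1]
        have e2 : a ^ (a+1/2) * Real.exp 1 ≤ (a+1) ^ (a+1/2) := by
          rw [Real.rpow_def_of_pos ha0, Real.rpow_def_of_pos (by linarith),
            ← Real.exp_add]
          apply Real.exp_le_exp.2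
          have e3 : Real.log (a+1) = Real.log a + Real.log (1 + 1/a) := by
            rw [← Real.log_mul (by linarith) (by positivity)]
            congr 1
            field_simp
          rw [e3]
          nlinarith [hlog]
        calc (a+1) * (a ^ (a + 1/2) * Real.exp (-a))
            = (a ^ (a+1/2) * Real.exp 1) * Real.exp (-(a+1)) * (a+1) := by
              rw [mul_assoc (a ^ (a+1/2)), ← Real.exp_add]
              ring_nf
        _ ≤ (a+1) ^ (a+1/2) * Real.exp (-(a+1)) * (a+1) := by
              apply mul_le_mul_of_nonneg_right (mul_le_mul_of_nonneg_right e2 (Real.exp_pos _).le)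
                (by linarith)
        _ = (a+1) ^ (a + 1/2) * (a+1) * Real.exp (-(a+1)) := by ring
      have hcast : ((m+1)! : ℝ) = (a+1) * (m ! : ℝ) := by
        rw [Nat.factorial_succ]
        push_cast
        ring
      have hfin : ((m+1)! : ℝ) ≤ (a+1) * (7/2 * (a ^ (a + 1/2) * Real.exp (-a))) := by
        rw [hcast]
        apply mul_le_mul_of_nonneg_left _ (by linarith)
        calc (m ! : ℝ) ≤ 7/2 * a ^ (a + 1/2) * Real.exp (-a) := ihm
        _ = 7/2 * (a ^ (a+1/2) * Real.exp (-a)) := by ring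
      calc ((m+1)! : ℝ) ≤ (a+1) * (7/2 * (a ^ (a + 1/2) * Real.exp (-a))) := hfin
      _ = 7/2 * ((a+1) * (a ^ (a + 1/2) * Real.exp (-a))) := by ring
      _ ≤ 7/2 * ((a+1) ^ ((a+1) + 1/2) * Real.exp (-(a+1))) := by
            apply mul_le_mul_of_nonneg_left hkey (by norm_num)
      _ = 7/2 * (↑(m+1):ℝ) ^ ((↑(m+1):ℝ) + 1/2) * Real.exp (-(↑(m+1):ℝ)) := by
            push_cast
            ring

lemma my_Gamma_le {x : ℝ} (hx : 2 ≤ x) :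
    Real.Gamma x ≤ 6 * x ^ (x - 1/2) * Real.exp (-x) := by
  have hx0 : (0:ℝ) < x := by linarith
  obtain ⟨m, hm⟩ : ∃ m : ℕ, ⌊x⌋₊ = m + 1 := ⟨⌊x⌋₊ - 1, by
    have : 2 ≤ ⌊x⌋₊ := Nat.le_floor (by exact_mod_cast hx)
    omega⟩
  have hm1 : 1 ≤ m := by
    have : 2 ≤ ⌊x⌋₊ := Nat.le_floor (by exact_mod_cast hx)
    omega
  set b : ℝ := (m:ℝ) + 1 with hb
  have hbx : b ≤ x := by
    have := Nat.floor_le hx0.le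
    rw [hm] at this
    push_cast at this
    linarith
  have hxb : x < b + 1 := by
    have := Nat.lt_floor_add_one x
    rw [hm] at this
    push_cast at this
    linarith
  have hb2 : (2:ℝ) ≤ b := by
    have : (1:ℝ) ≤ (m:ℝ) := by exact_mod_cast hm1
    linarith
  have hb0 : (0:ℝ) < b := by linarith
  set θ : ℝ := x - b with hθ
  have hθ0 : 0 ≤ θ := by linarith
  have hθ1 : θ < 1 := by linarith
  -- log-convexity of Gamma
  have hconv := Real.convexOn_log_Gamma.2 (Set.mem_Ioi.2 hb0)
    (Set.mem_Ioi.2 (by linarith : (0:ℝ) < b + 1)) (by linarith : (0:ℝ) ≤ 1 - θ) hθ0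
    (by ring)
  simp only [smul_eq_mul, Function.comp_apply] at hconv
  have hpt : (1 - θ) * b + θ * (b + 1) = x := by ring
  rw [hpt] at hconv
  -- Gamma values at integers
  have hGb : Real.Gamma b = (m ! : ℝ) := by
    rw [hb]
    exact_mod_cast Real.Gamma_nat_eq_factorial m
  have hGb1 : Real.Gamma (b + 1) = ((m+1)! : ℝ) := by
    rw [hb, show (m:ℝ) + 1 + 1 = ((m+1 : ℕ) : ℝ) + 1 by push_cast; ring]
    exact_mod_cast Real.Gamma_nat_eq_factorial (m+1)
  -- factorial bounds, in log form
  have hfac1 := my_factorial_le (m+1) (by omega)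
  have hfacB : ((m+1)! : ℝ) ≤ 7/2 * b ^ (b + 1/2) * Real.exp (-b) := by
    convert hfac1 using 3 <;> push_cast <;> ring
  have hfacA : (m ! : ℝ) ≤ 7/2 * b ^ (b - 1/2) * Real.exp (-b) := by
    have h1 : ((m+1)! : ℝ) = b * (m ! : ℝ) := by
      rw [Nat.factorial_succ]; push_cast; ring
    have h2 : b ^ (b + 1/2) = b ^ (b - 1/2) * b := by
      rw [show b + 1/2 = (b - 1/2) + 1 by ring, Real.rpow_add_one hb0.ne']
    rw [h1, h2] at hfacB
    have h3 : b * (m ! : ℝ) ≤ b * (7/2 * b ^ (b - 1/2) * Real.exp (-b)) := by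
      calc b * (m ! : ℝ) ≤ 7/2 * (b ^ (b - 1/2) * b) * Real.exp (-b) := hfacB
      _ = b * (7/2 * b ^ (b - 1/2) * Real.exp (-b)) := by ring
    exact le_of_mul_le_mul_left h3 hb0
  -- positivity facts
  have hfacApos : (0:ℝ) < (m ! : ℝ) := by exact_mod_cast Nat.factorial_pos m
  have hfacBpos : (0:ℝ) < ((m+1)! : ℝ) := by exact_mod_cast Nat.factorial_pos (m+1)
  have hlogA : Real.log (m ! : ℝ) ≤ Real.log (7/2) + (b - 1/2) * Real.log b + (-b) := by
    calc Real.log (m ! : ℝ) ≤ Real.log (7/2 * b ^ (b - 1/2) * Real.exp (-b)) :=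
          Real.log_le_log hfacApos hfacA
    _ = Real.log (7/2) + (b - 1/2) * Real.log b + (-b) := by
        rw [Real.log_mul (by positivity) (Real.exp_pos _).ne', Real.log_mul (by norm_num)
          (by positivity), Real.log_rpow hb0, Real.log_exp]
  have hlogB : Real.log ((m+1)! : ℝ) ≤ Real.log (7/2) + (b + 1/2) * Real.log b + (-b) := by
    calc Real.log ((m+1)! : ℝ) ≤ Real.log (7/2 * b ^ (b + 1/2) * Real.exp (-b)) :=
          Real.log_le_log hfacBpos hfacB
    _ = Real.log (7/2) + (b + 1/2) * Real.log b + (-b) := by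
        rw [Real.log_mul (by positivity) (Real.exp_pos _).ne', Real.log_mul (by norm_num)
          (by positivity), Real.log_rpow hb0, Real.log_exp]
  -- combine
  have hcomb : Real.log (Real.Gamma x) ≤ Real.log (7/2) + (x - 1/2) * Real.log b - b := by
    rw [hGb, hGb1] at hconv
    calc Real.log (Real.Gamma x) ≤ (1-θ) * Real.log (m ! : ℝ) + θ * Real.log ((m+1)! : ℝ) := hconv
    _ ≤ (1-θ) * (Real.log (7/2) + (b - 1/2) * Real.log b + (-b))
        + θ * (Real.log (7/2) + (b + 1/2) * Real.log b + (-b)) := by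
        apply add_le_add
        · exact mul_le_mul_of_nonneg_left hlogA (by linarith)
        · exact mul_le_mul_of_nonneg_left hlogB hθ0
    _ = Real.log (7/2) + (b + θ - 1/2) * Real.log b - b := by ring
    _ = Real.log (7/2) + (x - 1/2) * Real.log b - b := by rw [hθ]; ring_nf
  -- key log comparison
  have hlogxb : θ/x ≤ Real.log x - Real.log b := by
    have h1 : Real.log (b/x) ≤ b/x - 1 := Real.log_le_sub_one_of_pos (by positivity)
    rw [Real.log_div hb0.ne' hx0.ne'] at h1
    have h2 : θ/x = 1 - b/x := by rw [hθ]; field_simp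
    rw [h2]
    linarith
  have hlog127 : (5:ℝ)/12 ≤ Real.log 6 - Real.log (7/2) := by
    have h1 : Real.log ((7:ℝ)/12) ≤ 7/12 - 1 := Real.log_le_sub_one_of_pos (by norm_num)
    have h2 : Real.log ((7:ℝ)/12) = Real.log (7/2) - Real.log 6 := by
      rw [show (7:ℝ)/12 = (7/2)/6 by norm_num, Real.log_div (by norm_num) (by norm_num)]
    linarith
  have hfinallog : Real.log (Real.Gamma x) ≤ Real.log 6 + (x - 1/2) * Real.log x - x := by
    have hkey : (x - 1/2) * (Real.log x - Real.log b) ≥ θ - 1/4 := by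
      have h1 : (x - 1/2) * (Real.log x - Real.log b) ≥ (x - 1/2) * (θ/x) := by
        apply mul_le_mul_of_nonneg_left hlogxb (by linarith)
      have h2 : (x - 1/2) * (θ/x) = θ - θ/(2*x) := by field_simp
      have h3 : θ/(2*x) ≤ 1/4 := by
        rw [div_le_iff₀ (by positivity)]
        nlinarith
      linarith
    rw [mul_sub] at hkey
    linarith [hcomb, hlog127]
  have hGpos := Real.Gamma_pos_of_pos hx0
  calc Real.Gamma x = Real.exp (Real.log (Real.Gamma x)) := (Real.exp_log hGpos).symm
  _ ≤ Real.exp (Real.log 6 + (x - 1/2) * Real.log x - x) := Real.exp_le_exp.2 hfinallog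
  _ = 6 * x ^ (x - 1/2) * Real.exp (-x) := by
      rw [show Real.log 6 + (x - 1/2) * Real.log x - x
          = Real.log 6 + (x - 1/2) * Real.log x + (-x) by ring,
        Real.exp_add, Real.exp_add, Real.exp_log (by norm_num), ← Real.log_rpow hx0,
        Real.exp_log (Real.rpow_pos_of_pos hx0 _)]

lemma my_abs_Gamma_prod_le {x y : ℝ} (hx : 0 < x) (m : ℕ) :
    ‖Complex.Gamma ((x:ℂ) + y*Complex.I)‖ *
      ∏ j ∈ range m, ‖(x:ℂ) + y*Complex.I + j‖
    ≤ Real.Gamma x * ∏ j ∈ range m, (x + j) := by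
  set z : ℂ := (x:ℂ) + y*Complex.I with hz
  have hzre : z.re = x := by simp [hz]
  have hre : ∀ j : ℕ, (z + j).re = x + j := by
    intro j; simp [hz]
  have habs_ge : ∀ j : ℕ, x + j ≤ ‖z + j‖ := by
    intro j
    have := Complex.re_le_norm (z + j)
    rwa [hre j] at this
  have hxj : ∀ j : ℕ, (0:ℝ) < x + j := fun j => by positivity
  set Pm : ℝ := ∏ j ∈ range m, ‖z + j‖ with hPm
  set Qm : ℝ := ∏ j ∈ range m, (x + j) with hQm
  have hQmpos : 0 < Qm := Finset.prod_pos fun j _ => hxj j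
  have hPmpos : 0 < Pm := Finset.prod_pos fun j _ => lt_of_lt_of_le (hxj j) (habs_ge j)
  have key : ∀ n : ℕ, max m 1 ≤ n →
      ‖Complex.GammaSeq z n‖ * Pm ≤ Real.GammaSeq x n * Qm := by
    intro n hn
    have hmn : m ≤ n + 1 := le_trans (le_max_left m 1) (le_trans hn (Nat.le_succ n))
    have hn1 : 1 ≤ n := le_trans (le_max_right m 1) hn
    have hnpos : (0:ℝ) < n := by exact_mod_cast hn1
    set C : ℝ := (n:ℝ) ^ x * (n ! : ℝ) with hC
    have hCpos : 0 < C := by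
      apply mul_pos (Real.rpow_pos_of_pos hnpos x)
      exact_mod_cast Nat.factorial_pos n
    set Rz : ℝ := ∏ j ∈ Finset.Ico m (n+1), ‖z + j‖ with hRz
    set Rx : ℝ := ∏ j ∈ Finset.Ico m (n+1), (x + j) with hRx
    have hRxpos : 0 < Rx := Finset.prod_pos fun j _ => hxj j
    have hRle : Rx ≤ Rz := Finset.prod_le_prod (fun j _ => (hxj j).le) (fun j _ => habs_ge j)
    have hsplitz : (∏ j ∈ range (n+1), ‖z + j‖) = Pm * Rz := by
      rw [hPm, hRz, Finset.range_eq_Ico, Finset.range_eq_Ico]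
      exact (Finset.prod_Ico_consecutive _ (Nat.zero_le m) hmn).symm
    have hsplitx : (∏ j ∈ range (n+1), (x + j)) = Qm * Rx := by
      rw [hQm, hRx, Finset.range_eq_Ico, Finset.range_eq_Ico]
      exact (Finset.prod_Ico_consecutive _ (Nat.zero_le m) hmn).symm
    have habsseq : ‖Complex.GammaSeq z n‖ = C / (Pm * Rz) := by
      rw [Complex.GammaSeq, norm_div, norm_mul, norm_prod, ← hsplitz]
      congr 2
      · rw [show (n:ℂ) = ((n:ℝ):ℂ) by push_cast; rfl,
          Complex.norm_cpow_eq_rpow_re_of_pos hnpos, hzre]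
      · rw [Complex.norm_natCast]
    have hrealseq : Real.GammaSeq x n = C / (Qm * Rx) := by
      rw [Real.GammaSeq, hsplitx]
    have hRzpos : 0 < Rz := lt_of_lt_of_le hRxpos hRle
    rw [habsseq, hrealseq]
    rw [div_mul_eq_mul_div, div_mul_eq_mul_div]
    rw [div_le_div_iff₀ (mul_pos hPmpos hRzpos) (mul_pos hQmpos hRxpos)]
    calc C * Pm * (Qm * Rx) = (C * (Pm * Qm)) * Rx := by ring
    _ ≤ (C * (Pm * Qm)) * Rz := by
        apply mul_le_mul_of_nonneg_left hRle
        have := mul_pos hPmpos hQmpos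
        nlinarith [hCpos]
    _ = C * Qm * (Pm * Rz) := by ring
  have t1 : Tendsto (fun n => ‖Complex.GammaSeq z n‖ * Pm) atTop
      (𝓝 (‖Complex.Gamma z‖ * Pm)) :=
    ((continuous_norm.tendsto _).comp (Complex.GammaSeq_tendsto_Gamma z)).mul_const Pm
  have t2 : Tendsto (fun n => Real.GammaSeq x n * Qm) atTop
      (𝓝 (Real.Gamma x * Qm)) := (Real.GammaSeq_tendsto_Gamma x).mul_const Qm
  exact le_of_tendsto_of_tendsto t1 t2 (eventually_atTop.2 ⟨max m 1, key⟩)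

lemma my_abs_Gamma_le_exp {x y : ℝ} (hx : 0 < x) (m : ℕ) :
    ‖Complex.Gamma ((x:ℂ) + y*Complex.I)‖ ≤
      Real.Gamma x * Real.exp (-(1/2) * ∑ j ∈ range m,
        (Real.log ((x+j)^2 + y^2) - Real.log ((x+j)^2))) := by
  have hmain := my_abs_Gamma_prod_le (y := y) hx m
  set z : ℂ := (x:ℂ) + y*Complex.I with hz
  have hre : ∀ j : ℕ, (z + j).re = x + j := by
    intro j; simp [hz]
  have hxj : ∀ j : ℕ, (0:ℝ) < x + j := fun j => by positivity
  have habs : ∀ j : ℕ, ‖z + j‖ = Real.sqrt ((x+j)^2 + y^2) := by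
    intro j
    rw [Complex.norm_def, Complex.normSq_apply]
    congr 1
    simp [hz]
    ring
  have hfac : ∀ j : ℕ, (x + j) / ‖z + j‖
      = Real.exp (-(1/2) * (Real.log ((x+j)^2 + y^2) - Real.log ((x+j)^2))) := by
    intro j
    have hA : (0:ℝ) < (x+j)^2 + y^2 := by positivity
    have hB : (0:ℝ) < (x+j)^2 := by positivity
    rw [habs j, Real.sqrt_eq_rpow, Real.rpow_def_of_pos hA,
      show -(1/2) * (Real.log ((x+j)^2 + y^2) - Real.log ((x+j)^2))
        = Real.log ((x+j)^2) * (1/2) - Real.log ((x+j)^2+y^2) * (1/2) by ring,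
      Real.exp_sub]
    congr 1
    rw [← Real.rpow_def_of_pos hB, ← Real.sqrt_eq_rpow, Real.sqrt_sq (hxj j).le]
  have habspos : (0:ℝ) < ∏ j ∈ range m, ‖z + j‖ := by
    apply Finset.prod_pos
    intro j _
    calc (0:ℝ) < x + j := hxj j
    _ ≤ ‖z + j‖ := by
        have h := Complex.re_le_norm (z + j)
        rwa [hre j] at h
  have hexp : Real.exp (-(1/2) * ∑ j ∈ range m,
        (Real.log ((x+j)^2 + y^2) - Real.log ((x+j)^2)))
      = ∏ j ∈ range m, ((x+j)/‖z+j‖) := by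
    rw [Finset.mul_sum, Real.exp_sum]
    exact Finset.prod_congr rfl fun j _ => (hfac j).symm
  have hrhs : Real.Gamma x * Real.exp (-(1/2) * ∑ j ∈ range m,
        (Real.log ((x+j)^2 + y^2) - Real.log ((x+j)^2)))
      = (Real.Gamma x * ∏ j ∈ range m, (x + j)) / ∏ j ∈ range m, ‖z + j‖ := by
    rw [hexp, Finset.prod_div_distrib, mul_div_assoc]
  rw [hrhs, le_div_iff₀ habspos]
  exact hmain

section f

variable {x y : ℝ}

private noncomputable def ff (x y : ℝ) : ℝ → ℝ :=
  fun w => Real.log ((x+w)^2 + y^2) - Real.log ((x+w)^2)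

private noncomputable def ff' (x y : ℝ) : ℝ → ℝ :=
  fun w => 2*(x+w)/((x+w)^2+y^2) - 2/(x+w)

lemma ff_nonneg (hx : 0 < x) {v : ℝ} (hv : 0 ≤ v) : 0 ≤ ff x y v := by
  have h : (0:ℝ) < x + v := by linarith
  have := Real.log_le_log (by positivity : (0:ℝ) < (x+v)^2) (by nlinarith [sq_nonneg y] : (x+v)^2 ≤ (x+v)^2 + y^2)
  simpa [ff] using this

lemma ff_hasDerivAt (h : 0 < x + v) : HasDerivAt (ff x y) (ff' x y v) v := by
  have hids : HasDerivAt (fun w : ℝ => x + w) 1 v := (hasDerivAt_id v).const_add x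
  have h1 : HasDerivAt (fun w : ℝ => (x+w)^2) (2*(x+v)) v := by
    simpa using hids.fun_pow 2
  have h2 : HasDerivAt (fun w : ℝ => (x+w)^2 + y^2) (2*(x+v)) v := h1.add_const _
  have h3 := (Real.hasDerivAt_log (by positivity : (x+v)^2 + y^2 ≠ 0)).comp v h2
  have h4 := (Real.hasDerivAt_log (by positivity : (x+v)^2 ≠ 0)).comp v h1
  have := h3.fun_sub h4
  refine this.congr_deriv ?_
  unfold ff'
  field_simp

lemma ff'_hasDerivAt (h : 0 < x + v) :
    HasDerivAt (ff' x y)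
      ((2*((x+v)^2+y^2) - 2*(x+v)*(2*(x+v)))/((x+v)^2+y^2)^2 + 2/(x+v)^2) v := by
  have hids : HasDerivAt (fun w : ℝ => x + w) 1 v := (hasDerivAt_id v).const_add x
  have h1 : HasDerivAt (fun w : ℝ => (x+w)^2) (2*(x+v)) v := by
    simpa using hids.fun_pow 2
  have h2 : HasDerivAt (fun w : ℝ => (x+w)^2 + y^2) (2*(x+v)) v := h1.add_const _
  have hnum : HasDerivAt (fun w : ℝ => 2*(x+w)) 2 v := by
    simpa using hids.const_mul 2
  have hq1 := hnum.fun_div h2 (by positivity : (x+v)^2 + y^2 ≠ 0)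
  have hq2 := (hasDerivAt_const v (2:ℝ)).fun_div hids (by positivity : x + v ≠ 0)
  have := hq1.fun_sub hq2
  refine this.congr_deriv ?_
  field_simp
  ring

lemma ff'_deriv_nonneg (h : 0 < x + v) :
    0 ≤ (2*((x+v)^2+y^2) - 2*(x+v)*(2*(x+v)))/((x+v)^2+y^2)^2 + 2/(x+v)^2 := by
  set u := x + v with hu'
  clear_value u
  have hu : 0 < u := h
  have hD : 0 < u^2 + y^2 := by positivity
  rw [div_add_div _ _ (by positivity) (by positivity), le_div_iff₀ (by positivity)]
  ring_nf
  nlinarith [sq_nonneg y, sq_nonneg u, sq_nonneg (u*y), mul_pos hu hu]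

lemma ff_convexOn (hx : 0 < x) : ConvexOn ℝ (Set.Ici 0) (ff x y) := by
  apply convexOn_of_hasDerivWithinAt2_nonneg (convex_Ici 0) (f' := ff' x y)
    (f'' := fun v => (2*((x+v)^2+y^2) - 2*(x+v)*(2*(x+v)))/((x+v)^2+y^2)^2 + 2/(x+v)^2)
  · intro v hv
    have : 0 < x + v := by have : (0:ℝ) ≤ v := hv; linarith
    exact (ff_hasDerivAt this).continuousAt.continuousWithinAt
  · intro v hv
    rw [interior_Ici] at hv
    have : 0 < x + v := by have : (0:ℝ) < v := hv; linarith
    exact (ff_hasDerivAt this).hasDerivWithinAt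
  · intro v hv
    rw [interior_Ici] at hv
    have : 0 < x + v := by have : (0:ℝ) < v := hv; linarith
    exact (ff'_hasDerivAt this).hasDerivWithinAt
  · intro v hv
    rw [interior_Ici] at hv
    have : 0 < x + v := by have : (0:ℝ) < v := hv; linarith
    exact ff'_deriv_nonneg this

lemma ff_contOn (hx : 0 < x) {a b : ℝ} (ha : 0 ≤ a) (hb : 0 ≤ b) :
    ContinuousOn (ff x y) (Set.uIcc a b) := by
  intro v hv
  have hv0 : 0 ≤ v := by
    rcases le_total a b with h | h
    · rw [Set.uIcc_of_le h] at hv; linarith [hv.1]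
    · rw [Set.uIcc_of_ge h] at hv; linarith [hv.1]
  exact (ff_hasDerivAt (by linarith : 0 < x + v)).continuousAt.continuousWithinAt

lemma chord_integral (a A B : ℝ) :
    ∫ v in a..(a+1), ((a+1-v)*A + (v-a)*B) = (A+B)/2 := by
  have h1 : (fun v : ℝ => ((a+1-v)*A + (v-a)*B))
      = fun v => ((a+1)*A - a*B) + (B-A)*v := by funext v; ring
  rw [h1]
  have h2 : ∫ v in a..(a+1), ((a+1)*A - a*B + (B-A)*v)
      = (∫ _ in a..(a+1), ((a+1)*A - a*B)) + ∫ v in a..(a+1), ((B-A)*v) :=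
    intervalIntegral.integral_add intervalIntegrable_const
      (Continuous.intervalIntegrable (by continuity) _ _)
  rw [h2, intervalIntegral.integral_const, intervalIntegral.integral_const_mul, integral_id]
  simp
  ring

lemma ff_trapezoid (hx : 0 < x) (k : ℕ) :
    ∫ v in (k:ℝ)..((k:ℝ)+1), ff x y v ≤ (ff x y k + ff x y (k+1))/2 := by
  have hconv := ff_convexOn (y := y) hx
  have hchord : ∀ v ∈ Set.Icc (k:ℝ) ((k:ℝ)+1),
      ff x y v ≤ ((k:ℝ)+1-v) * ff x y k + (v-(k:ℝ)) * ff x y ((k:ℝ)+1) := by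
    intro v hv
    have h1 : ((k:ℝ)+1-v) • (k:ℝ) + (v-(k:ℝ)) • ((k:ℝ)+1) = v := by
      simp only [smul_eq_mul]; ring
    have := hconv.2 (Set.mem_Ici.2 (by positivity : (0:ℝ) ≤ (k:ℝ)))
      (Set.mem_Ici.2 (by positivity : (0:ℝ) ≤ (k:ℝ)+1))
      (by linarith [hv.2] : (0:ℝ) ≤ (k:ℝ)+1-v) (by linarith [hv.1] : (0:ℝ) ≤ v-(k:ℝ))
      (by ring)
    rw [h1] at this
    simpa [smul_eq_mul] using this
  calc ∫ v in (k:ℝ)..((k:ℝ)+1), ff x y v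
      ≤ ∫ v in (k:ℝ)..((k:ℝ)+1), (((k:ℝ)+1-v) * ff x y k + (v-(k:ℝ)) * ff x y ((k:ℝ)+1)) := by
        apply intervalIntegral.integral_mono_on (by linarith)
        · exact (ff_contOn hx (by positivity) (by positivity)).intervalIntegrable
        · exact (Continuous.intervalIntegrable (by continuity) _ _)
        · exact hchord
  _ = (ff x y k + ff x y ((k:ℝ)+1))/2 := chord_integral _ _ _

lemma ff_sum_ge (hx : 0 < x) (N : ℕ) :
    (∫ v in (0:ℝ)..(N:ℝ), ff x y v) + ff x y 0 / 2 ≤ ∑ j ∈ range (N+1), ff x y j := by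
  have hint : ∀ k : ℕ, k < N → IntervalIntegrable (ff x y) MeasureTheory.volume (k:ℝ) ((k:ℝ)+1) :=
    fun k _ => (ff_contOn hx (by positivity) (by positivity)).intervalIntegrable
  have hsplit : ∑ k ∈ range N, ∫ v in ((k:ℕ):ℝ)..((k+1:ℕ):ℝ), ff x y v
      = ∫ v in ((0:ℕ):ℝ)..((N:ℕ):ℝ), ff x y v := by
    apply intervalIntegral.sum_integral_adjacent_intervals
    intro k hk
    push_cast
    exact hint k hk
  have h1 : ∫ v in (0:ℝ)..(N:ℝ), ff x y v ≤ ∑ k ∈ range N, (ff x y k + ff x y (k+1))/2 := by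
    norm_num at hsplit
    rw [← hsplit]
    apply Finset.sum_le_sum
    intro k _
    have := ff_trapezoid (y := y) hx k
    push_cast
    exact this
  have h2 : ∑ k ∈ range N, (ff x y k + ff x y (k+1))/2
      = (∑ j ∈ range (N+1), ff x y j) - ff x y 0/2 - ff x y N/2 := by
    have e1 : ∑ k ∈ range N, (ff x y k + ff x y (k+1))/2
        = (∑ k ∈ range N, ff x y k)/2 + (∑ k ∈ range N, ff x y ((k:ℝ)+1))/2 := by
      simp only [← Finset.sum_div, ← Finset.sum_add_distrib]
      rw [Finset.sum_add_distrib, add_div]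
    have e2 : ∑ k ∈ range (N+1), ff x y k = (∑ k ∈ range N, ff x y k) + ff x y N :=
      Finset.sum_range_succ _ N
    have e3 : ∑ k ∈ range (N+1), ff x y k = (∑ k ∈ range N, ff x y ((k:ℝ)+1)) + ff x y 0 := by
      have := Finset.sum_range_succ' (fun k : ℕ => ff x y k) N
      push_cast at this ⊢
      convert this using 2
    rw [e1]
    linarith [e2, e3]
  have h3 : 0 ≤ ff x y N := ff_nonneg hx (by positivity)
  linarith [h1, h2]

lemma ff_integral_eval (hx : 0 < x) (hy : 0 < y) (N : ℕ) :
    ∫ v in (0:ℝ)..(N:ℝ), ff x y v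
    = ((x+N) * ff x y N + 2*y*Real.arctan ((x+N)/y))
      - (x * ff x y 0 + 2*y*Real.arctan (x/y)) := by
  have key : ∀ v ∈ Set.uIcc (0:ℝ) (N:ℝ),
      HasDerivAt (fun w => (x+w) * ff x y w + 2*y*Real.arctan ((x+w)/y)) (ff x y v) v := by
    intro v hv
    have hv0 : 0 ≤ v := by
      rw [Set.uIcc_of_le (by positivity)] at hv
      exact hv.1
    have hxv : 0 < x + v := by linarith
    have hids : HasDerivAt (fun w : ℝ => x + w) 1 v := (hasDerivAt_id v).const_add x
    have hprod := (hids.fun_mul (ff_hasDerivAt (y := y) hxv))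
    have harc : HasDerivAt (fun w : ℝ => 2*y*Real.arctan ((x+w)/y))
        (2*y * (1/(1+((x+v)/y)^2) * (1/y))) v := by
      have hdiv : HasDerivAt (fun w : ℝ => (x+w)/y) (1/y) v := by
        simpa using hids.div_const y
      exact ((Real.hasDerivAt_arctan ((x+v)/y)).comp v hdiv).const_mul (2*y)
    have := hprod.fun_add harc
    refine this.congr_deriv ?_
    unfold ff ff'
    rw [show (1:ℝ) * (Real.log ((x+v)^2 + y^2) - Real.log ((x+v)^2))
      = Real.log ((x+v)^2 + y^2) - Real.log ((x+v)^2) by ring]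
    have hcancel : (x+v) * (2*(x+v)/((x+v)^2+y^2) - 2/(x+v))
        + 2*y * (1/(1+((x+v)/y)^2) * (1/y)) = 0 := by
      field_simp
      ring
    linarith [hcancel]
  rw [intervalIntegral.integral_eq_sub_of_hasDerivAt key
    ((ff_contOn hx le_rfl (by positivity)).intervalIntegrable)]
  norm_num

end f

lemma my_abs_Gamma_vertical {x y : ℝ} (hx : 2 ≤ x) (hy : 0 < y) :
    ‖Complex.Gamma ((x:ℂ) + y*Complex.I)‖
      ≤ 6 * (x^2+y^2) ^ ((x - 1/2)/2) * Real.exp (-(π*y/2)) := by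
  have hx0 : (0:ℝ) < x := by linarith
  set F0 : ℝ := Real.log (x^2+y^2) - Real.log (x^2) with hF0
  have hff0 : ff x y 0 = F0 := by simp [ff, hF0]
  set a : ℝ := Real.arctan (x/y) with ha
  set g : ℝ → ℝ := fun r =>
    Real.Gamma x * Real.exp (-(1/2) * (F0/2 + (2*y*r - x*F0 - 2*y*a))) with hg
  have hGpos := Real.Gamma_pos_of_pos hx0
  -- step 1: bound for each N
  have bound : ∀ N : ℕ, ‖Complex.Gamma ((x:ℂ) + y*Complex.I)‖
      ≤ g (Real.arctan ((x+N)/y)) := by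
    intro N
    have h1 := my_abs_Gamma_le_exp (y := y) hx0 (N+1)
    have hsum_eq : (∑ j ∈ range (N+1), (Real.log ((x+j)^2 + y^2) - Real.log ((x+j)^2)))
        = ∑ j ∈ range (N+1), ff x y j := rfl
    rw [hsum_eq] at h1
    have h2 := ff_sum_ge (y := y) hx0 N
    have h3 := ff_integral_eval hx0 hy N
    have h4 : 0 ≤ (x+N) * ff x y N :=
      mul_nonneg (by positivity) (ff_nonneg hx0 (by positivity))
    have h5 : F0/2 + (2*y*Real.arctan ((x+N)/y) - x*F0 - 2*y*a)
        ≤ ∑ j ∈ range (N+1), ff x y j := by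
      rw [h3] at h2
      rw [← hff0, ha]
      linarith
    calc ‖Complex.Gamma ((x:ℂ) + y*Complex.I)‖
        ≤ Real.Gamma x * Real.exp (-(1/2) * ∑ j ∈ range (N+1), ff x y j) := h1
    _ ≤ g (Real.arctan ((x+N)/y)) := by
        rw [hg]
        apply mul_le_mul_of_nonneg_left _ hGpos.le
        apply Real.exp_le_exp.2
        nlinarith [h5]
  -- step 2: take the limit N → ∞
  have harctan : Tendsto (fun N : ℕ => Real.arctan ((x+N)/y)) atTop (𝓝 (π/2)) := by
    apply (Real.tendsto_arctan_atTop.mono_right nhdsWithin_le_nhds).comp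
    apply Tendsto.atTop_div_const hy
    exact tendsto_atTop_add_const_left atTop x tendsto_natCast_atTop_atTop
  have hgcont : Continuous g := by
    apply continuous_const.mul
    apply Real.continuous_exp.comp
    fun_prop
  have hfinal : ‖Complex.Gamma ((x:ℂ) + y*Complex.I)‖ ≤ g (π/2) :=
    ge_of_tendsto ((hgcont.tendsto _).comp harctan) (Eventually.of_forall bound)
  -- step 3: estimate g (π/2)
  have hax : y * a ≤ x := by
    have := my_arctan_le_self (t := x/y) (by positivity)
    rw [ha]
    calc y * Real.arctan (x/y) ≤ y * (x/y) := by
          apply mul_le_mul_of_nonneg_left this hy.le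
    _ = x := by field_simp
  set E : ℝ := -(1/2) * (F0/2 + (2*y*(π/2) - x*F0 - 2*y*a)) with hE
  have hgval : g (π/2) = Real.Gamma x * Real.exp E := rfl
  have hApos : (0:ℝ) < x^2 + y^2 := by positivity
  calc ‖Complex.Gamma ((x:ℂ) + y*Complex.I)‖ ≤ g (π/2) := hfinal
  _ = Real.Gamma x * Real.exp E := hgval
  _ ≤ (6 * x ^ (x - 1/2) * Real.exp (-x)) * Real.exp E := by
      apply mul_le_mul_of_nonneg_right (my_Gamma_le hx) (Real.exp_pos E).le
  _ = 6 * Real.exp (Real.log x * (x - 1/2) + (-x) + E) := by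
      rw [Real.rpow_def_of_pos hx0, Real.exp_add, Real.exp_add]
      ring
  _ ≤ 6 * Real.exp (Real.log (x^2+y^2) * ((x - 1/2)/2) + (-(π*y/2))) := by
      apply mul_le_mul_of_nonneg_left _ (by norm_num)
      apply Real.exp_le_exp.2
      rw [hE, hF0]
      have hlogsq : Real.log (x^2) = 2 * Real.log x := by
        rw [show x^2 = x^(2:ℕ) by norm_num, Real.log_pow]
        push_cast
        ring
      rw [hlogsq]
      nlinarith [hax]
  _ = 6 * (x^2+y^2) ^ ((x - 1/2)/2) * Real.exp (-(π*y/2)) := by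
      rw [Real.exp_add, Real.rpow_def_of_pos hApos]
      ring

lemma my_zeta_le {w : ℂ} (hw : 2 ≤ w.re) : ‖riemannZeta w‖ ≤ π^2/6 := by
  have hw1 : 1 < w.re := by linarith
  rw [zeta_eq_tsum_one_div_nat_cpow hw1]
  have hw0 : w ≠ 0 := by
    intro h
    rw [h] at hw
    norm_num at hw
  have hterm : ∀ n : ℕ, ‖1 / (n:ℂ)^w‖ ≤ 1/(n:ℝ)^2 := by
    intro n
    rcases Nat.eq_zero_or_pos n with h0 | hpos
    · subst h0
      simp [Complex.zero_cpow hw0]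
    · have hn : (0:ℝ) < n := by exact_mod_cast hpos
      have hn1 : (1:ℝ) ≤ n := by exact_mod_cast hpos
      rw [norm_div, norm_one, show ((n:ℂ)) = (((n:ℝ)):ℂ) by push_cast; rfl,
        Complex.norm_cpow_eq_rpow_re_of_pos hn]
      apply div_le_div_of_nonneg_left one_pos.le (by positivity)
      calc (n:ℝ)^2 = (n:ℝ)^((2:ℕ):ℝ) := by rw [Real.rpow_natCast]
      _ ≤ (n:ℝ)^w.re := Real.rpow_le_rpow_of_exponent_le hn1 (by exact_mod_cast hw)
  have hsum2 : Summable (fun n : ℕ => 1/(n:ℝ)^2) := hasSum_zeta_two.summable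
  have hsumnorm : Summable (fun n : ℕ => ‖1 / (n:ℂ)^w‖) :=
    Summable.of_nonneg_of_le (fun n => norm_nonneg _) hterm hsum2
  have hsumnorm' : Summable (fun n : ℕ => ‖1 / (n:ℂ)^w‖) := by
    exact hsumnorm
  have hstep := norm_tsum_le_tsum_norm hsumnorm'
  calc ‖∑' n : ℕ, 1 / (n:ℂ)^w‖ ≤ ∑' n : ℕ, ‖1 / (n:ℂ)^w‖ := hstep
  _ = ∑' n : ℕ, ‖1 / (n:ℂ)^w‖ := rfl
  _ ≤ ∑' n : ℕ, 1/(n:ℝ)^2 := Summable.tsum_le_tsum hterm hsumnorm hsum2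
  _ = π^2/6 := hasSum_zeta_two.tsum_eq

lemma my_abs_cos_le (z : ℂ) :
    ‖Complex.cos z‖ ≤ (Real.exp z.im + Real.exp (-z.im))/2 := by
  rw [Complex.cos, norm_div]
  calc ‖Complex.exp (z*Complex.I) + Complex.exp (-z*Complex.I)‖
        / ‖(2:ℂ)‖
      ≤ (‖Complex.exp (z*Complex.I)‖ + ‖Complex.exp (-z*Complex.I)‖)
        / ‖(2:ℂ)‖ := by
        gcongr
        exact norm_add_le _ _
  _ = (Real.exp (-z.im) + Real.exp z.im)/2 := by
        rw [Complex.norm_exp, Complex.norm_exp, Complex.norm_two]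
        congr 2 <;> simp [Complex.mul_re]
  _ = (Real.exp z.im + Real.exp (-z.im))/2 := by ring

lemma my_numeric : (1 + Real.exp (-(π/2))) * π ≤ 4 := by
  have hq : (1.314:ℝ) ≤ 1 + π/10 := by nlinarith [pi_gt_d6]
  have hq5 : (1.314:ℝ)^5 ≤ (1+π/10)^5 := pow_le_pow_left₀ (by norm_num) hq 5
  have h1 : (1+π/10)^5 ≤ Real.exp (π/2) := by
    calc (1+π/10)^5 ≤ (Real.exp (π/10))^5 :=
          pow_le_pow_left₀ (by positivity)
            (by linarith [Real.add_one_le_exp (π/10)] : (1 + π/10) ≤ Real.exp (π/10)) 5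
    _ = Real.exp (π/2) := by
        rw [← Real.exp_nat_mul]
        congr 1
        push_cast
        ring
  set E := Real.exp (-(π/2)) with hE
  have hEp : 0 < E := Real.exp_pos _
  have hE3 : E * Real.exp (π/2) = 1 := by
    rw [hE, ← Real.exp_add]
    norm_num
  have hE4 : E * (1.314:ℝ)^5 ≤ 1 := by
    calc E * (1.314:ℝ)^5 ≤ E * Real.exp (π/2) := by
          apply mul_le_mul_of_nonneg_left (le_trans hq5 h1) hEp.le
    _ = 1 := hE3
  have hEb : E ≤ 1/(1.314:ℝ)^5 := by
    rw [le_div_iff₀ (by norm_num)]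
    exact hE4
  nlinarith [pi_lt_d2, pi_gt_d6, hEp]

theorem stmt9 (σ t : ℝ) (hσ : σ ≤ -1) (ht : 1/2 ≤ |t|) :
    ‖riemannZeta (σ + t * Complex.I)‖
      ≤ 2 * (2 * π) ^ σ * ((1 - σ)^2 + t^2) ^ ((1:ℝ)/4 - σ/2) := by
  have hx : (2:ℝ) ≤ 1 - σ := by linarith
  have hx0 : (0:ℝ) < 1 - σ := by linarith
  have ht0 : t ≠ 0 := by
    intro h
    rw [h] at ht
    norm_num at ht
  have hy0 : (0:ℝ) < |t| := abs_pos.2 ht0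
  set x : ℝ := 1 - σ with hxdef
  set y : ℝ := |t| with hydef
  set w : ℂ := ((x:ℝ):ℂ) - (t:ℂ)*Complex.I with hwdef
  have hwre : w.re = x := by simp [hwdef]
  have hwim : w.im = -t := by simp [hwdef]
  -- functional equation
  have hfe := riemannZeta_one_sub (s := w)
    (fun n => by
      intro h
      have : w.re = (-(n:ℂ)).re := by rw [h]
      rw [hwre] at this
      simp at this
      have : (0:ℝ) ≤ (n:ℝ) := Nat.cast_nonneg n
      linarith)
    (by
      intro h
      have : w.re = (1:ℂ).re := by rw [h]
      rw [hwre] at this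
      simp at this
      linarith)
  have hsw : (1:ℂ) - w = (σ:ℂ) + t*Complex.I := by
    rw [hwdef, hxdef]
    push_cast
    ring
  rw [hsw] at hfe
  rw [hfe]
  -- abs of each factor
  have habs : ‖2 * (2*(π:ℂ))^(-w) * Complex.Gamma w * Complex.cos ((π:ℂ)*w/2)
      * riemannZeta w‖
      = 2 * ‖(2*(π:ℂ))^(-w)‖ * ‖Complex.Gamma w‖
        * ‖Complex.cos ((π:ℂ)*w/2)‖ * ‖riemannZeta w‖ := by
    simp [norm_mul, Complex.norm_two]
  rw [habs]
  -- factor 1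
  have hA1 : ‖(2*(π:ℂ))^(-w)‖ = (2*π) ^ (σ-1) := by
    rw [show (2*(π:ℂ)) = (((2*π:ℝ)):ℂ) by push_cast; rfl,
      Complex.norm_cpow_eq_rpow_re_of_pos (by positivity)]
    congr 1
    rw [Complex.neg_re, hwre, hxdef]
    ring
  -- factor 2
  have hA2 : ‖Complex.Gamma w‖
      ≤ 6 * (x^2+y^2) ^ ((x - 1/2)/2) * Real.exp (-(π*y/2)) := by
    have hvert := my_abs_Gamma_vertical (x := x) (y := y) hx hy0
    rcases le_or_gt 0 t with hts | hts
    · have hyt : y = t := by rw [hydef, _root_.abs_of_nonneg hts]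
      have hconj : w = (starRingEnd ℂ) ((x:ℂ) + y*Complex.I) := by
        rw [hwdef, hyt]
        simp [Complex.ext_iff]
      rw [hconj, Complex.Gamma_conj, Complex.norm_conj]
      exact hvert
    · have hyt : y = -t := by rw [hydef, _root_.abs_of_neg hts]
      have hw' : w = (x:ℂ) + y*Complex.I := by
        rw [hwdef, hyt]
        push_cast
        ring
      rw [hw']
      exact hvert
  -- factor 3
  have hA3 : ‖Complex.cos ((π:ℂ)*w/2)‖
      ≤ (1 + Real.exp (-(π/2)))/2 * Real.exp (π*y/2) := by
    have h1 := my_abs_cos_le ((π:ℂ)*w/2)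
    have him : ((π:ℂ)*w/2).im = -(π*t/2) := by
      simp [Complex.div_im, Complex.mul_im, hwim, hwre]
      ring
    rw [him] at h1
    have h2 : Real.exp (-(π*t/2)) + Real.exp (-(-(π*t/2)))
        = Real.exp (π*y/2) + Real.exp (-(π*y/2)) := by
      rcases le_or_gt 0 t with hts | hts
      · rw [show y = t from by rw [hydef, _root_.abs_of_nonneg hts]]
        ring_nf
      · rw [show y = -t from by rw [hydef, _root_.abs_of_neg hts]]
        ring_nf
    rw [h2] at h1
    have h3 : Real.exp (-(π*y/2)) ≤ Real.exp (-(π/2)) * Real.exp (π*y/2) := by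
      rw [← Real.exp_add]
      apply Real.exp_le_exp.2
      have hy2 : (1:ℝ)/2 ≤ y := by rw [hydef]; exact ht
      nlinarith [pi_pos]
    calc ‖Complex.cos ((π:ℂ)*w/2)‖
        ≤ (Real.exp (π*y/2) + Real.exp (-(π*y/2)))/2 := h1
    _ ≤ (Real.exp (π*y/2) + Real.exp (-(π/2)) * Real.exp (π*y/2))/2 := by linarith
    _ = (1 + Real.exp (-(π/2)))/2 * Real.exp (π*y/2) := by ring
  -- factor 4
  have hA4 : ‖riemannZeta w‖ ≤ π^2/6 := my_zeta_le (by rw [hwre]; exact hx)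
  -- combine
  set P : ℝ := (x^2+y^2) ^ ((x - 1/2)/2) with hP
  have hPpos : 0 < P := Real.rpow_pos_of_pos (by positivity) _
  have hkey : 2 * ‖(2*(π:ℂ))^(-w)‖ * ‖Complex.Gamma w‖
        * ‖Complex.cos ((π:ℂ)*w/2)‖ * ‖riemannZeta w‖
      ≤ 2 * ((2*π) ^ (σ-1)) * (6 * P * Real.exp (-(π*y/2)))
        * ((1 + Real.exp (-(π/2)))/2 * Real.exp (π*y/2)) * (π^2/6) := by
    rw [hA1]
    gcongr <;> first
      | exact hA2
      | exact hA3
      | exact hA4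
      | positivity
  have hexp1 : Real.exp (-(π*y/2)) * Real.exp (π*y/2) = 1 := by
    rw [← Real.exp_add]
    norm_num
  have hbase : ((2*π:ℝ)) ^ (σ-1) * (2*π) = (2*π) ^ σ := by
    rw [← Real.rpow_add_one (by positivity : (2*π:ℝ) ≠ 0)]
    norm_num
  have hPP : ((1 - σ)^2 + t^2) ^ ((1:ℝ)/4 - σ/2) = P := by
    rw [hP, hxdef, hydef]
    rw [_root_.sq_abs]
    congr 1
    ring
  rw [hPP]
  calc 2 * ‖(2*(π:ℂ))^(-w)‖ * ‖Complex.Gamma w‖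
        * ‖Complex.cos ((π:ℂ)*w/2)‖ * ‖riemannZeta w‖
      ≤ 2 * ((2*π) ^ (σ-1)) * (6 * P * Real.exp (-(π*y/2)))
        * ((1 + Real.exp (-(π/2)))/2 * Real.exp (π*y/2)) * (π^2/6) := hkey
  _ = ((2*π) ^ (σ-1)) * P * ((1 + Real.exp (-(π/2))) * π^2)
      * (Real.exp (-(π*y/2)) * Real.exp (π*y/2)) := by ring
  _ = ((2*π) ^ (σ-1)) * P * ((1 + Real.exp (-(π/2))) * π^2) := by
      rw [hexp1, mul_one]
  _ ≤ ((2*π) ^ (σ-1)) * P * (4*π) := by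
      apply mul_le_mul_of_nonneg_left _ (by positivity)
      nlinarith [my_numeric, pi_pos]
  _ = 2 * (2*π) ^ σ * P := by
      rw [← hbase]
      ring

end
end
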